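/- arXiv:1907.09685 — 2 statements merged into one kernel-verified Lean document; each statement's English description precedes it below -/
import Mathlib

section
/- If u(x,t) = V(x)·e^{λt} solves u_t = U₀·u_{xx} on [−h, h] with U₀ > 0 and satisfies u(±h,t) = u(0,t), and V is not identically zero, then either λ = 0 with V constant, or λ = −U₀π²k²/h² for some positive integer k. -/
/-- Auxiliary: a function with everywhere-derivative that vanishes on `Icc a b`
is constant on `Icc a b`. -/
lemma constOn_aux {a b : ℝ} (f f' : ℝ → ℝ) (hf : ∀ x, HasDerivAt f (f' x) x)
    (h0 : ∀ x ∈ Set.Icc a b, f' x = 0) : ∀ x ∈ Set.Icc a b, f x = f a := by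
  apply constant_of_has_deriv_right_zero
  · exact fun y _ => (hf y).continuousAt.continuousWithinAt
  · intro y hy
    have := (hf y).hasDerivWithinAt (s := Set.Ici y)
    rwa [h0 y ⟨hy.1, hy.2.le⟩] at this

set_option maxHeartbeats 1000000 in
theorem patch_eigenproblem (h U₀ lam : ℝ) (hh : 0 < h) (hU₀ : 0 < U₀)
    (V V' V'' : ℝ → ℝ)
    (hV' : ∀ x, HasDerivAt V (V' x) x)
    (hV'' : ∀ x, HasDerivAt V' (V'' x) x)
    (hode : ∀ x ∈ Set.Icc (-h) h, lam * V x = U₀ * V'' x)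
    (hbc1 : V h = V 0) (hbc2 : V (-h) = V 0)
    (hne : ∃ x ∈ Set.Icc (-h) h, V x ≠ 0) :
    (lam = 0 ∧ ∀ x ∈ Set.Icc (-h) h, V x = V 0) ∨
    (∃ k : ℕ, 0 < k ∧ lam = -U₀ * Real.pi ^ 2 * (k : ℝ) ^ 2 / h ^ 2) := by
  have hU₀' : U₀ ≠ 0 := ne_of_gt hU₀
  have h0mem : (0 : ℝ) ∈ Set.Icc (-h) h := ⟨by linarith, hh.le⟩
  have hhmem : h ∈ Set.Icc (-h) h := ⟨by linarith, le_refl h⟩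
  have hmhmem : -h ∈ Set.Icc (-h) h := ⟨le_refl _, by linarith⟩
  -- V'' x = (lam/U₀) * V x on the interval
  have hodeq : ∀ x ∈ Set.Icc (-h) h, V'' x = (lam / U₀) * V x := by
    intro x hx
    have := hode x hx
    field_simp
    linarith
  rcases lt_trichotomy lam 0 with hlam | hlam | hlam
  · -- lam < 0 : trigonometric case
    right
    set μ : ℝ := -(lam / U₀) with hμdef
    have hμ : 0 < μ := by
      have : lam / U₀ < 0 := div_neg_of_neg_of_pos hlam hU₀
      simp [hμdef]; linarith
    set ω : ℝ := Real.sqrt μ with hωdef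
    have hω : 0 < ω := Real.sqrt_pos.mpr hμ
    have hω2 : ω ^ 2 = μ := Real.sq_sqrt hμ.le
    set A : ℝ := V 0 with hA
    set B : ℝ := V' 0 / ω with hB
    -- W = V - (A cos(ωx) + B sin(ωx)) satisfies W'' = -ω² W, W(0)=W'(0)=0
    set W : ℝ → ℝ := fun x => V x - (A * Real.cos (ω * x) + B * Real.sin (ω * x)) with hW
    set W1 : ℝ → ℝ := fun x =>
      V' x - (-A * ω * Real.sin (ω * x) + B * ω * Real.cos (ω * x)) with hW1
    set W2 : ℝ → ℝ := fun x =>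
      V'' x - (-A * ω ^ 2 * Real.cos (ω * x) - B * ω ^ 2 * Real.sin (ω * x)) with hW2
    have hcos : ∀ x : ℝ, HasDerivAt (fun x => Real.cos (ω * x)) (-(ω * Real.sin (ω * x))) x := by
      intro x
      simpa [mul_comm] using ((hasDerivAt_id x).const_mul ω).cos
    have hsin : ∀ x : ℝ, HasDerivAt (fun x => Real.sin (ω * x)) (ω * Real.cos (ω * x)) x := by
      intro x
      simpa [mul_comm] using ((hasDerivAt_id x).const_mul ω).sin
    have hWd : ∀ x, HasDerivAt W (W1 x) x := by
      intro x
      have h1 := (hV' x).sub (((hcos x).const_mul A).add ((hsin x).const_mul B))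
      have h2 : W1 x = V' x - (A * -(ω * Real.sin (ω * x)) + B * (ω * Real.cos (ω * x))) := by
        simp only [hW1]; ring
      rw [h2]; exact h1
    have hW1d : ∀ x, HasDerivAt W1 (W2 x) x := by
      intro x
      have h1 := (hV'' x).sub (((hsin x).const_mul (-A * ω)).add
        ((hcos x).const_mul (B * ω)))
      have h2 : W2 x = V'' x -
          (-A * ω * (ω * Real.cos (ω * x)) + B * ω * -(ω * Real.sin (ω * x))) := by
        simp only [hW2]; ring
      rw [h2]; exact h1
    have hW2eq : ∀ x ∈ Set.Icc (-h) h, W2 x = -(ω ^ 2) * W x := by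
      intro x hx
      have := hodeq x hx
      simp only [hW2, hW, this, hω2, hμdef]
      ring
    -- energy E = ω² W² + W1² is constant, equal to E 0 = 0
    set E : ℝ → ℝ := fun x => ω ^ 2 * (W x * W x) + W1 x * W1 x with hE
    set E1 : ℝ → ℝ := fun x =>
      ω ^ 2 * (W1 x * W x + W x * W1 x) + (W2 x * W1 x + W1 x * W2 x) with hE1
    have hEd : ∀ x, HasDerivAt E (E1 x) x := by
      intro x
      exact (((hWd x).mul (hWd x)).const_mul (ω ^ 2)).add ((hW1d x).mul (hW1d x))
    have hE10 : ∀ x ∈ Set.Icc (-h) h, E1 x = 0 := by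
      intro x hx
      simp only [hE1, hW2eq x hx]
      ring
    have hEconst := constOn_aux E E1 hEd hE10
    have hW0 : W 0 = 0 := by simp [hW, hA]
    have hW10 : W1 0 = 0 := by
      simp [hW1, hB]
      field_simp
      ring
    have hE0 : E 0 = 0 := by simp [hE, hW0, hW10]
    have hEzero : ∀ x ∈ Set.Icc (-h) h, E x = 0 := by
      intro x hx
      rw [hEconst x hx, ← hEconst 0 h0mem, hE0]
    have hVeq : ∀ x ∈ Set.Icc (-h) h,
        V x = A * Real.cos (ω * x) + B * Real.sin (ω * x) := by
      intro x hx
      have hEx := hEzero x hx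
      simp only [hE] at hEx
      have hWx : W x = 0 := by
        have h1 : 0 ≤ W1 x * W1 x := mul_self_nonneg _
        have h2 : ω ^ 2 * (W x * W x) ≤ 0 := by linarith
        have h3 : 0 ≤ ω ^ 2 * (W x * W x) :=
          mul_nonneg (sq_nonneg ω) (mul_self_nonneg _)
        have h4 : ω ^ 2 * (W x * W x) = 0 := le_antisymm h2 h3
        have h5 : W x * W x = 0 := by
          rcases mul_eq_zero.mp h4 with h' | h'
          · exact absurd h' (by positivity)
          · exact h'
        exact mul_self_eq_zero.mp h5
      have : V x - (A * Real.cos (ω * x) + B * Real.sin (ω * x)) = 0 := hWx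
      linarith
    -- boundary conditions
    have hVh := hVeq h hhmem
    have hVmh := hVeq (-h) hmhmem
    rw [hbc1] at hVh
    rw [hbc2] at hVmh
    have hcosneg : Real.cos (ω * -h) = Real.cos (ω * h) := by
      rw [show ω * -h = -(ω * h) by ring, Real.cos_neg]
    have hsinneg : Real.sin (ω * -h) = -Real.sin (ω * h) := by
      rw [show ω * -h = -(ω * h) by ring, Real.sin_neg]
    rw [hcosneg, hsinneg] at hVmh
    have hBsin : B * Real.sin (ω * h) = 0 := by linarith
    have hAcos : A * (Real.cos (ω * h) - 1) = 0 := by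
      have hA0 : (A : ℝ) = V 0 := rfl
      nlinarith [hVh, hVmh]
    by_cases hs0 : Real.sin (ω * h) = 0
    · obtain ⟨n, hn⟩ := Real.sin_eq_zero_iff.mp hs0
      have hωh : 0 < ω * h := mul_pos hω hh
      have hnpos : 0 < n := by
        by_contra hcon
        push_neg at hcon
        have : (n : ℝ) ≤ 0 := by exact_mod_cast hcon
        nlinarith [Real.pi_pos]
      refine ⟨n.toNat, by omega, ?_⟩
      have hcast : ((n.toNat : ℕ) : ℝ) = (n : ℝ) := by
        exact_mod_cast Int.toNat_of_nonneg hnpos.le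
      rw [hcast]
      have hωval : ω * h = n * Real.pi := hn.symm
      have hsq : ω ^ 2 * h ^ 2 = (n : ℝ) ^ 2 * Real.pi ^ 2 := by
        linear_combination (ω * h + (n : ℝ) * Real.pi) * hωval
      have hω2' : ω ^ 2 = -(lam / U₀) := hω2
      have hlam2 : lam = -U₀ * ω ^ 2 := by
        field_simp at hω2'
        linarith
      rw [eq_div_iff (by positivity : (h : ℝ) ^ 2 ≠ 0)]
      linear_combination h ^ 2 * hlam2 - U₀ * hsq
    · exfalso
      have hB0 : B = 0 := by
        rcases mul_eq_zero.mp hBsin with h' | h'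
        · exact h'
        · exact absurd h' hs0
      have hA0 : A = 0 := by
        rcases mul_eq_zero.mp hAcos with h' | h'
        · exact h'
        · exfalso
          have hc1 : Real.cos (ω * h) = 1 := by linarith
          have := Real.sin_sq_add_cos_sq (ω * h)
          have : Real.sin (ω * h) ^ 2 = 0 := by nlinarith
          exact hs0 (by nlinarith [this])
      obtain ⟨x, hx, hVx⟩ := hne
      exact hVx (by rw [hVeq x hx, hA0, hB0]; ring)
  · -- lam = 0 : V is constant
    left
    refine ⟨hlam, ?_⟩
    have hV''0 : ∀ x ∈ Set.Icc (-h) h, V'' x = 0 := by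
      intro x hx
      have := hodeq x hx
      rw [hlam] at this
      simpa using this
    have hV'const := constOn_aux V' V'' hV'' hV''0
    set c : ℝ := V' (-h) with hc
    -- g = V - c x has zero derivative on the interval
    set g : ℝ → ℝ := fun x => V x - c * x with hg
    have hgd : ∀ x, HasDerivAt g (V' x - c) x := by
      intro x
      exact ((hV' x).sub ((hasDerivAt_id x).const_mul c)).congr_deriv (by ring)
    have hgd0 : ∀ x ∈ Set.Icc (-h) h, V' x - c = 0 := by
      intro x hx
      rw [hV'const x hx]
      ring
    have hgconst := constOn_aux g _ hgd hgd0
    have heqh := hgconst h hhmem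
    have heq0 := hgconst 0 h0mem
    simp only [hg] at heqh heq0
    have hc0 : c = 0 := by
      rw [hbc1] at heqh
      have : c * h = 0 := by linarith
      rcases mul_eq_zero.mp this with h' | h'
      · exact h'
      · linarith
    intro x hx
    have := hgconst x hx
    simp only [hg, hc0] at this heq0 ⊢
    linarith
  · -- lam > 0 : exponential case, contradiction
    exfalso
    set μ : ℝ := lam / U₀ with hμdef
    have hμ : 0 < μ := div_pos hlam hU₀
    set ω : ℝ := Real.sqrt μ with hωdef
    have hω : 0 < ω := Real.sqrt_pos.mpr hμ
    have hω2 : ω ^ 2 = μ := Real.sq_sqrt hμ.le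
    -- P = (V' - ωV)e^{ωx} and Q = (V' + ωV)e^{-ωx} are constant
    set P : ℝ → ℝ := fun x => (V' x - ω * V x) * Real.exp (ω * x) with hP
    set Q : ℝ → ℝ := fun x => (V' x + ω * V x) * Real.exp (-(ω * x)) with hQ
    have hexp : ∀ x : ℝ, HasDerivAt (fun x => Real.exp (ω * x)) (ω * Real.exp (ω * x)) x := by
      intro x
      simpa [mul_comm] using ((hasDerivAt_id x).const_mul ω).exp
    have hexpn : ∀ x : ℝ,
        HasDerivAt (fun x => Real.exp (-(ω * x))) (-(ω * Real.exp (-(ω * x)))) x := by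
      intro x
      simpa [mul_comm] using (((hasDerivAt_id x).const_mul ω).neg).exp
    set P1 : ℝ → ℝ := fun x =>
      (V'' x - ω * V' x) * Real.exp (ω * x) + (V' x - ω * V x) * (ω * Real.exp (ω * x)) with hP1
    set Q1 : ℝ → ℝ := fun x =>
      (V'' x + ω * V' x) * Real.exp (-(ω * x)) +
        (V' x + ω * V x) * (-(ω * Real.exp (-(ω * x)))) with hQ1
    have hPd : ∀ x, HasDerivAt P (P1 x) x := by
      intro x
      exact ((hV'' x).sub ((hV' x).const_mul ω)).mul (hexp x)
    have hQd : ∀ x, HasDerivAt Q (Q1 x) x := by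
      intro x
      exact ((hV'' x).add ((hV' x).const_mul ω)).mul (hexpn x)
    have hP10 : ∀ x ∈ Set.Icc (-h) h, P1 x = 0 := by
      intro x hx
      have hV2 := hodeq x hx
      simp only [hP1, hV2]
      linear_combination (-(V x * Real.exp (ω * x))) * hω2
    have hQ10 : ∀ x ∈ Set.Icc (-h) h, Q1 x = 0 := by
      intro x hx
      have hV2 := hodeq x hx
      simp only [hQ1, hV2]
      linear_combination (-(V x * Real.exp (-(ω * x)))) * hω2
    have hPconst := constOn_aux P P1 hPd hP10
    have hQconst := constOn_aux Q Q1 hQd hQ10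
    set p : ℝ := P (-h) with hp
    set q : ℝ := Q (-h) with hq
    -- from constancy: V' x - ω V x = p e^{-ωx}, V' x + ω V x = q e^{ωx}
    have hkey : ∀ x ∈ Set.Icc (-h) h,
        2 * ω * V x = q * Real.exp (ω * x) - p * Real.exp (-(ω * x)) := by
      intro x hx
      have h1 : (V' x - ω * V x) * Real.exp (ω * x) = p := hPconst x hx
      have h2 : (V' x + ω * V x) * Real.exp (-(ω * x)) = q := hQconst x hx
      have he : Real.exp (ω * x) * Real.exp (-(ω * x)) = 1 := by
        rw [← Real.exp_add]; simp
      have h1' : V' x - ω * V x = p * Real.exp (-(ω * x)) := by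
        rw [← h1, mul_assoc, he, mul_one]
      have h2' : V' x + ω * V x = q * Real.exp (ω * x) := by
        rw [← h2, mul_assoc,
          mul_comm (Real.exp (-(ω * x))) (Real.exp (ω * x)), he, mul_one]
      linarith
    set Ee : ℝ := Real.exp (ω * h) with hEe
    have hEe1 : 1 < Ee := by
      rw [hEe, show (1:ℝ) = Real.exp 0 from (Real.exp_zero).symm]
      exact Real.exp_lt_exp.mpr (mul_pos hω hh)
    have hEepos : 0 < Ee := by linarith
    have hEeinv : Real.exp (-(ω * h)) = Ee⁻¹ := by
      rw [hEe, Real.exp_neg]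
    have e1 : 2 * ω * V h = q * Ee - p * Ee⁻¹ := by
      have := hkey h hhmem
      rwa [hEeinv] at this
    have e2 : 2 * ω * V 0 = q - p := by
      have := hkey 0 h0mem
      simpa using this
    have e3 : 2 * ω * V (-h) = q * Ee⁻¹ - p * Ee := by
      have := hkey (-h) hmhmem
      rw [show ω * -h = -(ω * h) by ring] at this
      rw [hEeinv] at this
      rw [show -(-(ω * h)) = ω * h from by ring] at this
      rwa [← hEe] at this
    rw [hbc1] at e1
    rw [hbc2] at e3
    -- e1 = e2 = e3 forces p = q = 0
    have hEene : Ee ≠ 0 := ne_of_gt hEepos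
    have key1 : q * Ee ^ 2 - p = (q - p) * Ee := by
      have : q * Ee - p * Ee⁻¹ = q - p := by rw [← e1, ← e2]
      field_simp at this
      linarith
    have key2 : q - p * Ee ^ 2 = (q - p) * Ee := by
      have : q * Ee⁻¹ - p * Ee = q - p := by rw [← e3, ← e2]
      field_simp at this
      linarith
    have hsum : (q + p) * (Ee ^ 2 - 1) = 0 := by linarith
    have hqp : q = -p := by
      have hE2 : Ee ^ 2 - 1 > 0 := by nlinarith
      rcases mul_eq_zero.mp hsum with h' | h'
      · linarith
      · linarith
    have hp0 : p = 0 := by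
      rw [hqp] at key1
      have : p * (Ee - 1) ^ 2 = 0 := by nlinarith
      rcases mul_eq_zero.mp this with h' | h'
      · exact h'
      · nlinarith
    have hq0 : q = 0 := by rw [hqp, hp0]; ring
    obtain ⟨x, hx, hVx⟩ := hne
    have h0' := hkey x hx
    rw [hp0, hq0] at h0'
    apply hVx
    have h2 : (2 * ω) * V x = 0 := by rw [h0']; ring
    rcases mul_eq_zero.mp h2 with h' | h'
    · exact absurd h' (by positivity)
    · exact h'
end

section
/- For the projective Euler scheme with growth factor G(λ) = e^{λδ}(1 + λ(Δ−δ)), Δ > δ > 0: if λ < 0 and δ ≥ (1/(−λ))·log(−λ(Δ−δ)) with −λ(Δ−δ) > 1, then |G(λ)| ≤ 1. -/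
theorem projective_euler_stability (lam δ Δ : ℝ)
    (hδ : 0 < δ) (hΔ : δ < Δ) (hlam : lam < 0)
    (hbig : -lam * (Δ - δ) > 1)
    (hburst : δ ≥ (1 / (-lam)) * Real.log (-lam * (Δ - δ))) :
    |Real.exp (lam * δ) * (1 + lam * (Δ - δ))| ≤ 1 := by
  set a := -lam * (Δ - δ) with ha
  have ha1 : 1 < a := hbig
  have ha0 : 0 < a := by linarith
  have hnl : 0 < -lam := by linarith
  have hle : lam * δ ≤ -Real.log a := by
    have h := hburst
    rw [ge_iff_le, div_mul_eq_mul_div, one_mul, div_le_iff₀ hnl] at h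
    nlinarith
  have hexp : Real.exp (lam * δ) ≤ 1 / a := by
    calc Real.exp (lam * δ) ≤ Real.exp (-Real.log a) := Real.exp_le_exp.mpr hle
    _ = 1 / a := by rw [Real.exp_neg, Real.exp_log ha0, one_div]
  have hfac : 1 + lam * (Δ - δ) = 1 - a := by rw [ha]; ring
  rw [hfac, abs_mul, abs_of_pos (Real.exp_pos _), abs_of_nonpos (by linarith)]
  have hexp0 : 0 < Real.exp (lam * δ) := Real.exp_pos _
  have h1 : Real.exp (lam * δ) * -(1 - a) ≤ (1 / a) * (a - 1) := by
    have : -(1 - a) = a - 1 := by ring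
    rw [this]
    exact mul_le_mul_of_nonneg_right hexp (by linarith)
  have : (1 / a) * (a - 1) ≤ 1 := by
    rw [div_mul_eq_mul_div, one_mul, div_le_one ha0]; linarith
  linarith
end
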